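/- Let A ∈ F_q[X] be an additive polynomial that is not of the form aX^{p^h} with a ∈ F_q and h ≥ 0, set M = s_A(1), let s_0 = max{j > 0 : s_A(j) = M}, and let c_A := liminf_{n→∞} s_A(n)/n. Suppose A_*(X) = R(X)^q with R ∈ F_q[X] additive and r ≥ 1 is an integer such that A_*(A^{(s_0)}(X)) = X^{q^{M+r}} − X^{q^r}. Then c_A ≤ M/s_0, with equality if and only if the F_p-linear map z ↦ A_*(z) of F_{q^M} is not nilpotent (i.e., no iterate of z ↦ A_*(z) is the zero map on F_{q^M}). -/

import Mathlib

open Polynomial Filter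

/-- A polynomial over a field of characteristic `p` is additive iff every
monomial with nonzero coefficient has exponent a power of `p`
(equivalently, `A(X) = ∑ aᵢ X^(pⁱ)`). -/
def IsAdditivePoly {F : Type*} [Field F] (p : ℕ) (A : Polynomial F) : Prop :=
  ∀ i : ℕ, A.coeff i ≠ 0 → ∃ h : ℕ, i = p ^ h

/-- `polyIter P n` is the `n`-fold composition `P^{(n)}` of `P` with itself,
with the convention `P^{(0)} = X`. -/
noncomputable def polyIter {F : Type*} [Field F] (P : Polynomial F) (n : ℕ) : Polynomial F :=
  (fun Q => P.comp Q)^[n] Polynomial.X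

/-- `SplitsIn P j` : `P` splits completely over `F_{q^j}`, i.e. every root of
`P` in an algebraic closure of `F` lies in the subfield with `q^j` elements,
where `q = #F`. -/
def SplitsIn {F : Type*} [Field F] [Fintype F] (P : Polynomial F) (j : ℕ) : Prop :=
  ∀ y : AlgebraicClosure F, Polynomial.aeval y P = 0 → y ^ Fintype.card F ^ j = y

/-- `sDeg P n` : the degree over `F_q` of the splitting field of the `n`-th
iterate `P^{(n)}`, i.e. the least positive `j` such that `P^{(n)}` splits
completely in `F_{q^j}`. -/
noncomputable def sDeg {F : Type*} [Field F] [Fintype F] (P : Polynomial F) (n : ℕ) : ℕ :=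
  sInf {j : ℕ | 0 < j ∧ SplitsIn (polyIter P n) j}

/-- The `F_p`-linear map `z ↦ B(z)` on `F_{q^M}` (realized inside an algebraic
closure of `F` as the subfield of elements fixed by the `M`-th power of the
`q`-Frobenius) is nilpotent: some iterate of it is the zero map. -/
def IsNilpotentOn {F : Type*} [Field F] [Fintype F] (B : Polynomial F) (M : ℕ) : Prop :=
  ∃ n : ℕ, 0 < n ∧ ∀ y : AlgebraicClosure F,
    y ^ Fintype.card F ^ M = y → (fun z => Polynomial.aeval z B)^[n] y = 0

namespace SplitAux
open IntermediateField

set_option linter.unusedSectionVars false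

variable {p : ℕ} [hp : Fact p.Prime] {F : Type*} [Field F] [Fintype F] [hF : CharP F p]

local notation "K" => AlgebraicClosure F

theorem exists_v : ∃ v : ℕ, 0 < v ∧ Fintype.card F = p ^ v := by
  obtain ⟨n, -, hcard⟩ := FiniteField.card F p
  exact ⟨n, n.2, hcard⟩

include hp hF in
theorem exists_frob (c : ℕ) :
    ∃ φ : K →ₐ[F] K, ∀ x, φ x = x ^ Fintype.card F ^ c := by
  obtain ⟨v, hv0, hv⟩ := exists_v (p := p) (F := F)
  have hpow : ∀ x : K, iterateFrobenius K p (v * c) x = x ^ Fintype.card F ^ c := by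
    intro x; rw [iterateFrobenius_def, pow_mul, ← hv]
  refine ⟨⟨iterateFrobenius K p (v * c), fun a => ?_⟩, hpow⟩
  show iterateFrobenius K p (v * c) (algebraMap F K a) = algebraMap F K a
  rw [hpow, ← map_pow, FiniteField.pow_card_pow]

include hp hF in
theorem frob_comm_aeval (c : ℕ) (P : Polynomial F) (x : K) :
    aeval (x ^ Fintype.card F ^ c) P = aeval x P ^ Fintype.card F ^ c := by
  obtain ⟨φ, hφ⟩ := exists_frob (p := p) (F := F) c
  rw [← hφ, Polynomial.aeval_algHom_apply, hφ]

include hp hF in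
theorem sub_pow_q (c : ℕ) (x y : K) :
    (x - y) ^ Fintype.card F ^ c = x ^ Fintype.card F ^ c - y ^ Fintype.card F ^ c := by
  obtain ⟨v, hv0, hv⟩ := exists_v (p := p) (F := F)
  rw [hv, ← pow_mul]
  exact sub_pow_char_pow_of_commute p (v * c) (Commute.all x y)

include hp hF in
theorem add_pow_q (c : ℕ) (x y : K) :
    (x + y) ^ Fintype.card F ^ c = x ^ Fintype.card F ^ c + y ^ Fintype.card F ^ c := by
  obtain ⟨v, hv0, hv⟩ := exists_v (p := p) (F := F)
  rw [hv, ← pow_mul]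
  exact add_pow_char_pow x y p (v * c)

theorem aeval_add_of_additive {A : Polynomial F} (hA : IsAdditivePoly p A) (x y : K) :
    aeval (x + y) A = aeval x A + aeval y A := by
  rw [Polynomial.aeval_eq_sum_range (x + y), Polynomial.aeval_eq_sum_range x,
    Polynomial.aeval_eq_sum_range y, ← Finset.sum_add_distrib]
  refine Finset.sum_congr rfl fun i _ => ?_
  by_cases hc : A.coeff i = 0
  · simp [hc]
  · obtain ⟨h, rfl⟩ := hA i hc
    rw [add_pow_char_pow, smul_add]

theorem coeff_zero_of_additive {A : Polynomial F} (hA : IsAdditivePoly p A) :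
    A.coeff 0 = 0 := by
  by_contra hc
  obtain ⟨h, hh⟩ := hA 0 hc
  exact (pow_pos (Fact.out (p := p.Prime)).pos h).ne' hh.symm

theorem aeval_zero_of_additive {A : Polynomial F} (hA : IsAdditivePoly p A) :
    aeval (0 : K) A = 0 := by
  rw [Polynomial.aeval_def, Polynomial.eval₂_at_zero, coeff_zero_of_additive hA, map_zero]

theorem aeval_sub_of_additive {A : Polynomial F} (hA : IsAdditivePoly p A) (x y : K) :
    aeval (x - y) A = aeval x A - aeval y A := by
  have h := aeval_add_of_additive hA (x - y) y
  rw [sub_add_cancel] at h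
  exact eq_sub_of_add_eq h.symm

theorem polyIter_succ (P : Polynomial F) (n : ℕ) :
    polyIter P (n + 1) = P.comp (polyIter P n) :=
  Function.iterate_succ_apply' _ n Polynomial.X

theorem aeval_polyIter (P : Polynomial F) (n : ℕ) (y : K) :
    aeval y (polyIter P n) = (fun x : K => aeval x P)^[n] y := by
  induction n with
  | zero => simp [polyIter]
  | succ n ih => rw [polyIter_succ, Polynomial.aeval_comp, ih, Function.iterate_succ_apply']

theorem natDegree_polyIter (P : Polynomial F) (n : ℕ) :
    (polyIter P n).natDegree = P.natDegree ^ n := by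
  induction n with
  | zero => simp [polyIter]
  | succ n ih => rw [polyIter_succ, Polynomial.natDegree_comp, ih, pow_succ']

theorem pow_pow_fix {y : K} {Q a : ℕ} (h : y ^ Q ^ a = y) (k : ℕ) : y ^ Q ^ (a * k) = y := by
  induction k with
  | zero => simp
  | succ k ih => rw [Nat.mul_succ, pow_add, pow_mul, ih, h]

theorem pow_fix_of_dvd {y : K} {Q a j : ℕ} (h : y ^ Q ^ a = y) (hd : a ∣ j) :
    y ^ Q ^ j = y := by
  obtain ⟨k, rfl⟩ := hd
  exact pow_pow_fix h k

theorem exists_finite_degree (y : K) :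
    ∃ d : ℕ, 0 < d ∧ y ^ Fintype.card F ^ d = y := by
  have hy : IsIntegral F y := (Algebra.IsAlgebraic.isAlgebraic y).isIntegral
  haveI : FiniteDimensional F F⟮y⟯ := IntermediateField.adjoin.finiteDimensional hy
  haveI : Finite F⟮y⟯ := Module.finite_of_finite F
  letI : Fintype F⟮y⟯ := Fintype.ofFinite _
  have hcard : Fintype.card F⟮y⟯ = Fintype.card F ^ Module.finrank F F⟮y⟯ :=
    Module.card_eq_pow_finrank
  refine ⟨Module.finrank F F⟮y⟯, Module.finrank_pos, ?_⟩
  have hyE : y ∈ F⟮y⟯ := IntermediateField.mem_adjoin_simple_self F y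
  have h := FiniteField.pow_card (⟨y, hyE⟩ : F⟮y⟯)
  rw [hcard] at h
  have := congrArg Subtype.val h
  simpa using this

theorem pow_fix_gcd {y : K} {a b : ℕ} (ha0 : 0 < a) (hb0 : 0 < b)
    (ha : y ^ Fintype.card F ^ a = y) (hb : y ^ Fintype.card F ^ b = y) :
    y ^ Fintype.card F ^ Nat.gcd a b = y := by
  set q := Fintype.card F with hq
  have hq1 : 1 < q := Fintype.one_lt_card
  rcases eq_or_ne y 0 with rfl | hy
  · exact zero_pow (pow_pos (by omega) _).ne'
  have key : ∀ c : ℕ, 0 < c → y ^ q ^ c = y → y ^ (q ^ c - 1) = 1 := by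
    intro c hc0 hc
    have h1 : 1 ≤ q ^ c := Nat.one_le_pow _ _ (by omega)
    rw [← Nat.sub_add_cancel h1, pow_succ] at hc
    have := mul_right_cancel₀ hy (hc.trans (one_mul y).symm)
    exact this
  have h1 := key a ha0 ha
  have h2 := key b hb0 hb
  have h3 : y ^ Nat.gcd (q ^ a - 1) (q ^ b - 1) = 1 := pow_gcd_eq_one.mpr ⟨h1, h2⟩
  set D := Nat.gcd (q ^ a - 1) (q ^ b - 1) with hD
  have hga : 1 ≤ q ^ a := Nat.one_le_pow _ _ (by omega)
  have hgb : 1 ≤ q ^ b := Nat.one_le_pow _ _ (by omega)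
  have hgg : 1 ≤ q ^ Nat.gcd a b := Nat.one_le_pow _ _ (by omega)
  have hcast : ∀ c : ℕ, 1 ≤ q ^ c → D ∣ q ^ c - 1 → (q : ZMod D) ^ c = 1 := by
    intro c h1c hdvd
    have h0 : ((q ^ c - 1 : ℕ) : ZMod D) = 0 := (ZMod.natCast_eq_zero_iff _ _).mpr hdvd
    rw [Nat.cast_sub h1c, Nat.cast_pow, Nat.cast_one, sub_eq_zero] at h0
    exact h0
  have hqa : (q : ZMod D) ^ a = 1 := hcast a hga (Nat.gcd_dvd_left _ _)
  have hqb : (q : ZMod D) ^ b = 1 := hcast b hgb (Nat.gcd_dvd_right _ _)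
  have hqg : (q : ZMod D) ^ Nat.gcd a b = 1 := pow_gcd_eq_one.mpr ⟨hqa, hqb⟩
  have hdvd : D ∣ q ^ Nat.gcd a b - 1 := by
    rw [← ZMod.natCast_eq_zero_iff, Nat.cast_sub hgg, Nat.cast_pow, Nat.cast_one,
      sub_eq_zero, hqg]
  obtain ⟨k, hk⟩ := hdvd
  calc y ^ q ^ Nat.gcd a b = y ^ (q ^ Nat.gcd a b - 1) * y := by
        rw [← pow_succ, Nat.sub_add_cancel hgg]
    _ = (y ^ D) ^ k * y := by rw [hk, pow_mul]
    _ = y := by rw [h3, one_pow, one_mul]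

theorem exists_splitsIn {P : Polynomial F} (hP : P ≠ 0) :
    ∃ j : ℕ, 0 < j ∧ SplitsIn P j := by
  classical
  have hmap : P.map (algebraMap F K) ≠ 0 := Polynomial.map_ne_zero hP
  have hfin : {x : K | (P.map (algebraMap F K)).IsRoot x}.Finite :=
    Polynomial.finite_setOf_isRoot hmap
  choose d hd0 hd using fun y : K => exists_finite_degree y
  refine ⟨∏ y ∈ hfin.toFinset, d y, Finset.prod_pos fun y _ => hd0 y, fun y hy => ?_⟩
  have hyS : y ∈ hfin.toFinset := by
    rw [Set.Finite.mem_toFinset]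
    show (P.map (algebraMap F K)).IsRoot y
    rw [Polynomial.IsRoot, Polynomial.eval_map, ← Polynomial.aeval_def]
    exact hy
  exact pow_fix_of_dvd (hd y) (Finset.dvd_prod_of_mem d hyS)

theorem splitsIn_mono {A : Polynomial F} (hA : IsAdditivePoly p A) {a b j : ℕ} (hab : a ≤ b)
    (h : SplitsIn (polyIter A b) j) : SplitsIn (polyIter A a) j := by
  intro y hy
  apply h
  rw [aeval_polyIter] at hy ⊢
  obtain ⟨c, rfl⟩ := Nat.exists_eq_add_of_le hab
  rw [Nat.add_comm, Function.iterate_add_apply, hy]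
  exact Function.iterate_fixed (aeval_zero_of_additive hA) c

include hp hF in
theorem exists_frobL (M : ℕ) :
    ∃ φ : Module.End F K, ∀ x, φ x = x ^ Fintype.card F ^ M := by
  refine ⟨{ toFun := fun x => x ^ Fintype.card F ^ M,
            map_add' := fun x y => add_pow_q (p := p) M x y,
            map_smul' := fun c x => ?_ }, fun x => rfl⟩
  simp only [RingHom.id_apply]
  rw [Algebra.smul_def, Algebra.smul_def, mul_pow, ← map_pow, FiniteField.pow_card_pow]

theorem frobL_pow {φ : Module.End F (AlgebraicClosure F)} {M : ℕ}
    (hφ : ∀ x, φ x = x ^ Fintype.card F ^ M) (k : ℕ) (x : AlgebraicClosure F) :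
    (φ ^ k) x = x ^ Fintype.card F ^ (M * k) := by
  induction k with
  | zero => simp
  | succ k ih =>
    rw [pow_succ', Module.End.mul_apply, ih, hφ, ← pow_mul, ← pow_add, Nat.mul_succ]

theorem frobL_sub_iter {φ : Module.End F (AlgebraicClosure F)} {M : ℕ}
    (hφ : ∀ x, φ x = x ^ Fintype.card F ^ M) (k : ℕ) (x : AlgebraicClosure F) :
    ((φ - 1) ^ k) x = (fun z : AlgebraicClosure F => z ^ Fintype.card F ^ M - z)^[k] x := by
  rw [Module.End.pow_apply]
  have hfun : ⇑(φ - 1) = fun z : AlgebraicClosure F => z ^ Fintype.card F ^ M - z := by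
    funext z
    simp [LinearMap.sub_apply, hφ z]
  rw [hfun]

include hp hF in
theorem charP_end : CharP (Module.End F (AlgebraicClosure F)) p := by
  constructor
  intro n
  rw [← CharP.cast_eq_zero_iff K p n]
  constructor
  · intro h
    have h1 := congrArg (fun g : Module.End F K => g 1) h
    simpa [Module.End.natCast_apply, nsmul_eq_mul] using h1
  · intro h
    ext x
    show (n : Module.End F K) x = (0 : Module.End F K) x
    rw [Module.End.natCast_apply]
    simp [nsmul_eq_mul, h]

include hp hF in
theorem iter_f_pow_char {M : ℕ} (E : ℕ) (x : K) :
    (fun z : K => z ^ Fintype.card F ^ M - z)^[p ^ E] x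
      = x ^ Fintype.card F ^ (M * p ^ E) - x := by
  obtain ⟨φ, hφ⟩ := exists_frobL (p := p) (F := F) M
  haveI := charP_end (p := p) (F := F)
  rw [← frobL_sub_iter hφ]
  have h1 : (φ - 1) ^ p ^ E = φ ^ p ^ E - 1 := by
    have := sub_pow_char_pow_of_commute p E (Commute.one_right φ)
    simpa using this
  rw [h1, LinearMap.sub_apply, Module.End.one_apply, frobL_pow hφ]

include hp hF in
theorem module_lower_bound {M ℓ J N : ℕ}
    (hM : 0 < M) (hℓ : 0 < ℓ) (hMdvd : M ∣ ℓ) {y : K}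
    (hfix : y ^ Fintype.card F ^ ℓ = y) (hJN : J ≤ N)
    (hker : (fun x : K => x ^ Fintype.card F ^ M - x)^[N] y = 0)
    (hne : (fun x : K => x ^ Fintype.card F ^ M - x)^[J] y ≠ 0) :
    M * (J + 1) ≤ ℓ := by
  classical
  have hq1 : 1 < Fintype.card F := Fintype.one_lt_card (α := F)
  obtain ⟨φ, hφ⟩ := exists_frobL (p := p) (F := F) M
  have hf0 : (fun x : K => x ^ Fintype.card F ^ M - x) 0 = 0 := by
    have hne0 : Fintype.card F ^ M ≠ 0 := (pow_pos (by omega) M).ne'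
    simp [zero_pow hne0]
  obtain ⟨a, ha⟩ := hMdvd
  have ha0 : 0 < a := by
    rcases Nat.eq_zero_or_pos a with rfl | h
    · omega
    · exact h
  set c := a.factorization p with hc
  set a' := a / p ^ c with ha'
  have hfact : p ^ c * a' = a := Nat.ordProj_mul_ordCompl_eq_self a p
  have hndvd : ¬ p ∣ a' := Nat.not_dvd_ordCompl hp.out ha0.ne'
  have ha'0 : 0 < a' := Nat.ordCompl_pos p ha0.ne'
  have hpca : p ^ c ∣ a := Dvd.intro _ hfact
  have hclaim : J + 1 ≤ p ^ c := by
    by_contra hcon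
    push_neg at hcon
    have hpcJ : p ^ c ≤ J := by omega
    have hkill1 : (Polynomial.aeval φ (((X : Polynomial F) - 1) ^ N)) y = 0 := by
      rw [map_pow, map_sub, Polynomial.aeval_X, map_one, frobL_sub_iter hφ]
      exact hker
    have hkillX : (Polynomial.aeval φ ((X : Polynomial F) ^ a - 1)) y = 0 := by
      rw [map_sub, map_pow, Polynomial.aeval_X, map_one, LinearMap.sub_apply,
        Module.End.one_apply, frobL_pow hφ, ← ha, hfix, sub_self]
    set u : Polynomial F := ∑ i ∈ Finset.range a', (X : Polynomial F) ^ i with hu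
    have hgeom : u * ((X : Polynomial F) - 1) = (X : Polynomial F) ^ a' - 1 :=
      geom_sum_mul _ _
    have hXa : (X : Polynomial F) ^ a - 1 = ((X : Polynomial F) ^ a' - 1) ^ p ^ c := by
      rw [← hfact, mul_comm, pow_mul]
      have := sub_pow_char_pow_of_commute p c (Commute.one_right ((X : Polynomial F) ^ a'))
      simpa using this.symm
    set w : K := (Polynomial.aeval φ (((X : Polynomial F) - 1) ^ p ^ c)) y with hw
    have hw2 : (Polynomial.aeval φ (u ^ p ^ c)) w = 0 := by
      rw [hw, ← Module.End.mul_apply, ← map_mul, ← mul_pow, hgeom, ← hXa]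
      exact hkillX
    have hw3 : (Polynomial.aeval φ (((X : Polynomial F) - 1) ^ (N - p ^ c))) w = 0 := by
      rw [hw, ← Module.End.mul_apply, ← map_mul, ← pow_add, Nat.sub_add_cancel (hpcJ.trans hJN)]
      exact hkill1
    have ha'F : ((a' : F)) ≠ 0 := by
      rw [Ne, CharP.cast_eq_zero_iff F p]
      exact hndvd
    have hcop : IsCoprime (u ^ p ^ c) (((X : Polynomial F) - 1) ^ (N - p ^ c)) := by
      apply IsCoprime.pow
      have heval : u.eval 1 = (a' : F) := by
        rw [hu, Polynomial.eval_geom_sum]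
        simp
      have hdvd : ((X : Polynomial F) - C 1) ∣ (u - C ((a' : F))) := by
        rw [Polynomial.dvd_iff_isRoot]
        simp [Polynomial.IsRoot, heval]
      obtain ⟨vq, hvq⟩ := hdvd
      rw [Polynomial.C_1] at hvq
      have hCinv : C ((a' : F))⁻¹ * C ((a' : F)) = 1 := by
        rw [← Polynomial.C_mul, inv_mul_cancel₀ ha'F, Polynomial.C_1]
      refine ⟨C ((a' : F))⁻¹, - (C ((a' : F))⁻¹ * vq), ?_⟩
      linear_combination (C ((a' : F))⁻¹) * hvq + hCinv
    obtain ⟨s, t, hst⟩ := hcop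
    have hwzero : w = 0 := by
      have h1 : (Polynomial.aeval φ
          (s * u ^ p ^ c + t * (((X : Polynomial F) - 1) ^ (N - p ^ c)))) w = w := by
        rw [hst, map_one, Module.End.one_apply]
      rw [map_add, map_mul, map_mul, LinearMap.add_apply, Module.End.mul_apply,
        Module.End.mul_apply, hw2, hw3, map_zero, map_zero, add_zero] at h1
      exact h1.symm
    have hwf : (fun x : K => x ^ Fintype.card F ^ M - x)^[p ^ c] y = 0 := by
      have h2 := hwzero
      rw [hw, map_pow, map_sub, Polynomial.aeval_X, map_one] at h2
      rw [← frobL_sub_iter hφ]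
      exact h2
    apply hne
    have hJsplit : J = (J - p ^ c) + p ^ c := (Nat.sub_add_cancel hpcJ).symm
    rw [hJsplit, Function.iterate_add_apply, hwf]
    exact Function.iterate_fixed (f := fun x : K => x ^ Fintype.card F ^ M - x) hf0 _
  have hle : p ^ c ≤ a := Nat.le_of_dvd ha0 hpca
  calc M * (J + 1) ≤ M * p ^ c := Nat.mul_le_mul_left M hclaim
    _ ≤ M * a := Nat.mul_le_mul_left M hle
    _ = ℓ := ha.symm

end SplitAux

set_option maxHeartbeats 1000000 in
open SplitAux in
theorem liminf_le_and_eq_iff_not_nilpotent (p : ℕ) [Fact p.Prime] (F : Type*) [Field F]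
    [Fintype F] [CharP F p] (A : Polynomial F) (hA : IsAdditivePoly p A)
    (hexc : ¬ ∃ (a : F) (h : ℕ), A = Polynomial.C a * Polynomial.X ^ p ^ h)
    (s₀ : ℕ) (hs₀pos : 0 < s₀) (hs₀ : sDeg A s₀ = sDeg A 1)
    (hs₀max : ∀ j : ℕ, 0 < j → sDeg A j = sDeg A 1 → j ≤ s₀)
    (R : Polynomial F) (hR : IsAdditivePoly p R) (r : ℕ) (hr : 1 ≤ r)
    (heq : (R ^ Fintype.card F).comp (polyIter A s₀) =
      Polynomial.X ^ Fintype.card F ^ (sDeg A 1 + r) -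
        Polynomial.X ^ Fintype.card F ^ r) :
    Filter.liminf (fun n : ℕ => (sDeg A n : ℝ) / n) Filter.atTop ≤ (sDeg A 1 : ℝ) / s₀ ∧
    (Filter.liminf (fun n : ℕ => (sDeg A n : ℝ) / n) Filter.atTop = (sDeg A 1 : ℝ) / s₀ ↔
      ¬ IsNilpotentOn (R ^ Fintype.card F) (sDeg A 1)) := by
  classical
  have hp2 : 2 ≤ p := (Fact.out (p := p.Prime)).two_le
  set q := Fintype.card F with hqdef
  have hq1 : 1 < q := Fintype.one_lt_card (α := F)
  set M := sDeg A 1 with hMdef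
  set u : ℕ → ℝ := fun n : ℕ => (sDeg A n : ℝ) / n with hu
  set gA : AlgebraicClosure F → AlgebraicClosure F := fun x => aeval x A with hgA
  set gB : AlgebraicClosure F → AlgebraicClosure F := fun x => aeval x (R ^ q) with hgB
  set f : AlgebraicClosure F → AlgebraicClosure F := fun x => x ^ q ^ M - x with hfdef
  set t : AlgebraicClosure F → AlgebraicClosure F := fun x => x ^ q ^ r with htdef
  -- basic facts
  have hA0 : A ≠ 0 := fun h => hexc ⟨0, 0, by simp [h]⟩
  have hAdeg : 1 ≤ A.natDegree := by
    by_contra hcon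
    push_neg at hcon
    have h0 : A.natDegree = 0 := by omega
    have hAC : A = Polynomial.C (A.coeff 0) := Polynomial.eq_C_of_natDegree_eq_zero h0
    have hc : A.coeff 0 ≠ 0 := fun hc0 => hA0 (by rw [hAC, hc0, map_zero])
    obtain ⟨e, he⟩ := hA 0 hc
    exact (pow_pos (by omega : 0 < p) e).ne' he.symm
  have hIter0 : ∀ n, polyIter A n ≠ 0 := by
    intro n h
    have h1 := natDegree_polyIter A n
    rw [h] at h1
    have h2 : 1 ≤ A.natDegree ^ n := Nat.one_le_pow _ _ (by omega)
    simp at h1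
    omega
  have hScl : ∀ n, {j : ℕ | 0 < j ∧ SplitsIn (polyIter A n) j}.Nonempty :=
    fun n => exists_splitsIn (hIter0 n)
  have hsDeg_mem : ∀ n, 0 < sDeg A n ∧ SplitsIn (polyIter A n) (sDeg A n) :=
    fun n => Nat.sInf_mem (hScl n)
  have hM0 : 0 < M := (hsDeg_mem 1).1
  have hsDeg_le : ∀ n j, 0 < j → SplitsIn (polyIter A n) j → sDeg A n ≤ j :=
    fun n j h1 h2 => Nat.sInf_le ⟨h1, h2⟩
  have hmono : ∀ a b : ℕ, a ≤ b → sDeg A a ≤ sDeg A b := by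
    intro a b hab
    have hmem := Nat.sInf_mem (hScl b)
    exact Nat.sInf_le ⟨hmem.1, splitsIn_mono hA hab hmem.2⟩
  -- pointwise function facts
  have hgA0 : gA 0 = 0 := aeval_zero_of_additive hA
  have hgAadd : ∀ x y, gA (x + y) = gA x + gA y := aeval_add_of_additive hA
  have hgAsub : ∀ x y, gA (x - y) = gA x - gA y := aeval_sub_of_additive hA
  have hgAfrob : ∀ (c : ℕ) x, gA (x ^ q ^ c) = (gA x) ^ q ^ c :=
    fun c x => frob_comm_aeval (p := p) c A x
  have hgBfrob : ∀ (c : ℕ) x, gB (x ^ q ^ c) = (gB x) ^ q ^ c :=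
    fun c x => frob_comm_aeval (p := p) c (R ^ q) x
  have hgBadd : ∀ x y, gB (x + y) = gB x + gB y := by
    intro x y
    have hq' := add_pow_q (p := p) (F := F) 1 (aeval x R) (aeval y R)
    rw [pow_one] at hq'
    show aeval (x + y) (R ^ q) = aeval x (R ^ q) + aeval y (R ^ q)
    rw [map_pow, map_pow, map_pow, aeval_add_of_additive hR, hq']
  have hgBsub : ∀ x y, gB (x - y) = gB x - gB y := by
    intro x y
    have h := hgBadd (x - y) y
    rw [sub_add_cancel] at h
    exact eq_sub_of_add_eq h.symm
  have hgB0 : gB 0 = 0 := by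
    have h := hgBsub 0 0
    simpa using h
  have hgAiter : ∀ (n : ℕ) (y), aeval y (polyIter A n) = gA^[n] y :=
    fun n y => aeval_polyIter A n y
  have hgAiter0 : ∀ m, gA^[m] 0 = 0 := fun m => Function.iterate_fixed hgA0 m
  have hgBiter0 : ∀ m, gB^[m] 0 = 0 := fun m => Function.iterate_fixed hgB0 m
  have hgAiter_sub : ∀ (m : ℕ) x y, gA^[m] (x - y) = gA^[m] x - gA^[m] y := by
    intro m
    induction m with
    | zero => intro x y; simp
    | succ m ih =>
      intro x y
      rw [Function.iterate_succ_apply, Function.iterate_succ_apply,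
        Function.iterate_succ_apply, hgAsub, ih]
  have hgAiter_frob : ∀ (m c : ℕ) x, gA^[m] (x ^ q ^ c) = (gA^[m] x) ^ q ^ c := by
    intro m c
    induction m with
    | zero => intro x; simp
    | succ m ih =>
      intro x
      rw [Function.iterate_succ_apply, Function.iterate_succ_apply, hgAfrob, ih]
  have hgAiter_f : ∀ (m : ℕ) x, gA^[m] (f x) = f (gA^[m] x) := by
    intro m x
    rw [hfdef]
    simp only
    rw [hgAiter_sub, hgAiter_frob]
  have hgBt : ∀ x, gB (t x) = t (gB x) := by
    intro x
    rw [htdef]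
    simp only
    rw [hgBfrob]
  have hgBiter_t : ∀ (m : ℕ) x, t (gB^[m] x) = gB^[m] (t x) := by
    intro m
    induction m with
    | zero => intro x; simp
    | succ m ih =>
      intro x
      rw [Function.iterate_succ_apply, Function.iterate_succ_apply, ih, ← hgBt]
  have hgBf : ∀ x, gB (f x) = f (gB x) := by
    intro x
    rw [hfdef]
    simp only
    rw [hgBsub, hgBfrob]
  have hfgB : ∀ (m : ℕ) x, f (gB^[m] x) = gB^[m] (f x) := by
    intro m
    induction m with
    | zero => intro x; simp
    | succ m ih =>
      intro x
      rw [Function.iterate_succ_apply, Function.iterate_succ_apply, ih, ← hgBf]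
  have hfgB_iter : ∀ (k m : ℕ) x, f^[k] (gB^[m] x) = gB^[m] (f^[k] x) := by
    intro k m
    induction k with
    | zero => intro x; simp
    | succ k ih =>
      intro x
      rw [Function.iterate_succ_apply, Function.iterate_succ_apply, hfgB, ih]
  -- heq pointwise
  have hheq : ∀ x, gB (gA^[s₀] x) = t (f x) := by
    intro x
    have h1 := congrArg (aeval x) heq
    rw [Polynomial.aeval_comp, hgAiter s₀ x, map_sub, Polynomial.aeval_X_pow,
      Polynomial.aeval_X_pow] at h1
    have h2 : t (f x) = x ^ q ^ (M + r) - x ^ q ^ r := by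
      rw [htdef, hfdef]
      simp only
      rw [sub_pow_q (p := p), ← pow_mul, ← pow_add]
    rw [h2]
    exact h1
  have hft : ∀ x, t (f x) = f (t x) := by
    intro x
    rw [htdef, hfdef]
    simp only
    rw [sub_pow_q (p := p), ← pow_mul, ← pow_mul, mul_comm (q ^ M) (q ^ r)]
  -- Lemma I
  have lemI : ∀ (n : ℕ) (y), t^[n] (f^[n] y) = gB^[n] (gA^[n * s₀] y) := by
    intro n
    induction n with
    | zero => intro y; simp
    | succ n ih =>
      intro y
      rw [Function.iterate_succ_apply' t, Function.iterate_succ_apply f, ih (f y),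
        hgAiter_f (n * s₀) y, hgBiter_t n, ← hheq (gA^[n * s₀] y)]
      rw [← Function.iterate_add_apply gA s₀ (n * s₀) y]
      rw [show s₀ + n * s₀ = (n + 1) * s₀ by ring]
      rw [← Function.iterate_succ_apply gB]
  have hiterT : ∀ (Q k : ℕ) (x : AlgebraicClosure F),
      (fun z : AlgebraicClosure F => z ^ Q)^[k] x = x ^ Q ^ k := by
    intro Q k
    induction k with
    | zero => intro x; simp
    | succ k ih =>
      intro x
      rw [Function.iterate_succ_apply', ih, ← pow_mul, pow_succ]
  have htinj : ∀ (k : ℕ) (z : AlgebraicClosure F), t^[k] z = 0 → z = 0 := by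
    intro k z h
    rw [htdef] at h
    rw [hiterT (q ^ r) k z] at h
    exact pow_eq_zero_iff (pow_pos (pow_pos (by omega) r) k).ne' |>.mp h
  have hfin_of_root : ∀ (n : ℕ) y, gA^[n * s₀] y = 0 → f^[n] y = 0 := by
    intro n y h
    apply htinj n
    rw [lemI n y, h, hgBiter0]
  -- upper bound pieces
  have hiter_char : ∀ (E : ℕ) (x : AlgebraicClosure F),
      f^[p ^ E] x = x ^ q ^ (M * p ^ E) - x := by
    intro E x
    rw [hfdef, hqdef]
    exact iter_f_pow_char (p := p) (F := F) (M := M) E x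
  have hupper1 : ∀ E : ℕ, sDeg A (p ^ E * s₀) ≤ M * p ^ E := by
    intro E
    apply hsDeg_le _ _ (by positivity)
    intro y hy
    rw [hgAiter] at hy
    have h1 : f^[p ^ E] y = 0 := hfin_of_root _ y hy
    rw [hiter_char E y] at h1
    exact sub_eq_zero.mp h1
  -- liminf upper bound
  have hbdd : Filter.IsBoundedUnder (· ≥ ·) Filter.atTop u :=
    Filter.isBoundedUnder_of ⟨0, fun n => by rw [hu]; positivity⟩
  have hfreq1 : ∃ᶠ k in Filter.atTop, u k ≤ (M : ℝ) / s₀ := by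
    rw [Filter.frequently_atTop]
    intro N
    refine ⟨p ^ N * s₀, ?_, ?_⟩
    · calc N ≤ p ^ N := (Nat.lt_pow_self (n := N) (by omega)).le
        _ ≤ p ^ N * s₀ := Nat.le_mul_of_pos_right _ hs₀pos
    · have h1 := hupper1 N
      have h2 : ((sDeg A (p ^ N * s₀) : ℝ)) ≤ (M : ℝ) * (p : ℝ) ^ N := by
        exact_mod_cast h1
      rw [hu]
      simp only
      have hcast : ((p ^ N * s₀ : ℕ) : ℝ) = (p : ℝ) ^ N * (s₀ : ℝ) := by push_cast; ring
      rw [hcast]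
      have hs₀R : (0:ℝ) < (s₀ : ℝ) := by exact_mod_cast hs₀pos
      have hpN : (0:ℝ) < (p:ℝ) ^ N := by positivity
      calc (sDeg A (p ^ N * s₀) : ℝ) / ((p : ℝ) ^ N * s₀)
          ≤ ((M:ℝ) * (p:ℝ) ^ N) / ((p : ℝ) ^ N * s₀) := by gcongr
        _ = (M:ℝ) / s₀ := by field_simp
  have part1 : Filter.liminf u Filter.atTop ≤ (M : ℝ) / s₀ :=
    Filter.liminf_le_of_frequently_le hfreq1 hbdd
  -- ===== nilpotent case: strict upper bound =====
  have hnil_case : IsNilpotentOn (R ^ q) M → Filter.liminf u Filter.atTop < (M : ℝ) / s₀ := by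
    rintro ⟨m, hm0, hmkill⟩
    have hkillV : ∀ y : AlgebraicClosure F, y ^ q ^ M = y → gB^[p ^ m] y = 0 := by
      intro y hy
      have h1 : gB^[m] y = 0 := hmkill y hy
      have h2 : p ^ m = (p ^ m - m) + m := by
        have := (Nat.lt_pow_self (n := m) (by omega : 1 < p)).le
        omega
      rw [h2, Function.iterate_add_apply, h1, hgBiter0]
    have hNk : ∀ (k : ℕ) (x : AlgebraicClosure F), f^[k] x = 0 → gB^[p ^ m * k] x = 0 := by
      intro k
      induction k with
      | zero => intro x hx; simpa using hx
      | succ k ih =>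
        intro x hx
        have hfx : f (f^[k] x) = 0 := by
          rw [← Function.iterate_succ_apply' f]
          exact hx
        have hfix : (f^[k] x) ^ q ^ M = f^[k] x := by
          rw [hfdef] at hfx
          exact sub_eq_zero.mp hfx
        have h2 : gB^[p ^ m] (f^[k] x) = 0 := hkillV _ hfix
        have h3 : f^[k] (gB^[p ^ m] x) = 0 := by
          rw [hfgB_iter k (p ^ m) x, h2]
        have h4 := ih _ h3
        have h5 : p ^ m * (k + 1) = p ^ m * k + p ^ m := by ring
        rw [h5, Function.iterate_add_apply]
        exact h4
    have hupper2 : ∀ E : ℕ, m ≤ E → sDeg A ((p ^ E + p ^ (E - m)) * s₀) ≤ M * p ^ E := by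
      intro E hE
      apply hsDeg_le _ _ (by positivity)
      intro y hy
      rw [hgAiter] at hy
      have hw1 : gA^[p ^ (E - m) * s₀] (gA^[p ^ E * s₀] y) = 0 := by
        rw [← Function.iterate_add_apply]
        rw [show p ^ (E - m) * s₀ + p ^ E * s₀ = (p ^ E + p ^ (E - m)) * s₀ by ring]
        exact hy
      have hw2 : f^[p ^ (E - m)] (gA^[p ^ E * s₀] y) = 0 := hfin_of_root _ _ hw1
      have hw3 : gB^[p ^ E] (gA^[p ^ E * s₀] y) = 0 := by
        have h6 := hNk _ _ hw2
        rwa [show p ^ m * p ^ (E - m) = p ^ E by rw [← pow_add]; congr 1; omega] at h6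
      have h1 : f^[p ^ E] y = 0 := by
        apply htinj (p ^ E)
        rw [lemI (p ^ E) y, hw3]
      rw [hiter_char E y] at h1
      exact sub_eq_zero.mp h1
    set c₁ : ℝ := (M : ℝ) * (p : ℝ) ^ m / (((p : ℝ) ^ m + 1) * s₀) with hc₁
    have hs₀R : (0:ℝ) < (s₀ : ℝ) := by exact_mod_cast hs₀pos
    have hMR : (0:ℝ) < (M : ℝ) := by exact_mod_cast hM0
    have hpm : (0:ℝ) < (p:ℝ) ^ m := by positivity
    have hfreq2 : ∃ᶠ k in Filter.atTop, u k ≤ c₁ := by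
      rw [Filter.frequently_atTop]
      intro N
      refine ⟨(p ^ (m + N) + p ^ N) * s₀, ?_, ?_⟩
      · calc N ≤ p ^ N := (Nat.lt_pow_self (n := N) (by omega)).le
          _ ≤ (p ^ (m + N) + p ^ N) * s₀ := by
            have h1 : p ^ N ≤ p ^ (m + N) + p ^ N := by omega
            have h2 : (p ^ (m + N) + p ^ N) ≤ (p ^ (m + N) + p ^ N) * s₀ :=
              Nat.le_mul_of_pos_right _ hs₀pos
            omega
      · have h1 := hupper2 (m + N) (by omega)
        rw [show (m + N) - m = N by omega] at h1
        rw [hu]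
        simp only
        have hcast : (((p ^ (m + N) + p ^ N) * s₀ : ℕ) : ℝ)
            = ((p:ℝ) ^ (m + N) + (p:ℝ) ^ N) * (s₀ : ℝ) := by push_cast; ring
        rw [hcast]
        have hden : (0:ℝ) < ((p:ℝ) ^ (m + N) + (p:ℝ) ^ N) * (s₀ : ℝ) := by positivity
        have h2 : ((sDeg A ((p ^ (m + N) + p ^ N) * s₀) : ℕ) : ℝ)
            ≤ (M : ℝ) * (p:ℝ) ^ (m + N) := by exact_mod_cast h1
        calc ((sDeg A ((p ^ (m + N) + p ^ N) * s₀) : ℕ) : ℝ)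
              / (((p:ℝ) ^ (m + N) + (p:ℝ) ^ N) * (s₀ : ℝ))
            ≤ ((M : ℝ) * (p:ℝ) ^ (m + N))
              / (((p:ℝ) ^ (m + N) + (p:ℝ) ^ N) * (s₀ : ℝ)) := by gcongr
          _ = c₁ := by
              rw [hc₁, pow_add]
              field_simp
    have hlt : c₁ < (M:ℝ)/s₀ := by
      rw [hc₁, div_lt_div_iff₀ (by positivity) hs₀R]
      nlinarith
    exact lt_of_le_of_lt (Filter.liminf_le_of_frequently_le hfreq2 hbdd) hlt
  -- ===== non-nilpotent case: lower bound =====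
  have hnn_case : ¬ IsNilpotentOn (R ^ q) M →
      (M : ℝ) / s₀ ≤ Filter.liminf u Filter.atTop := by
    intro hnn
    have hwit0 : ∀ n : ℕ, 0 < n →
        ∃ y : AlgebraicClosure F, y ^ q ^ M = y ∧ gB^[n] y ≠ 0 := by
      intro n hn
      by_contra hcon
      push_neg at hcon
      exact hnn ⟨n, hn, fun y hy => hcon y hy⟩
    -- V is finite
    have hqM1 : 1 < q ^ M := by
      calc 1 < q := hq1
        _ = q ^ 1 := (pow_one q).symm
        _ ≤ q ^ M := Nat.pow_le_pow_right (by omega) hM0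
    have hpoly_ne : ((X : Polynomial (AlgebraicClosure F)) ^ q ^ M - X) ≠ 0 := by
      intro h
      have h1 := congrArg (fun P => Polynomial.coeff P 1) h
      simp only [Polynomial.coeff_sub, Polynomial.coeff_X_pow, Polynomial.coeff_X_one,
        Polynomial.coeff_zero] at h1
      rw [if_neg (by omega : ¬ (1 : ℕ) = q ^ M)] at h1
      simp at h1
    have hVfin : {x : AlgebraicClosure F | x ^ q ^ M = x}.Finite := by
      apply (Polynomial.finite_setOf_isRoot hpoly_ne).subset
      intro x hx
      simp only [Set.mem_setOf_eq, Polynomial.IsRoot, Polynomial.eval_sub,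
        Polynomial.eval_pow, Polynomial.eval_X]
      rw [sub_eq_zero]
      exact hx
    set NV := hVfin.toFinset.card with hNV
    set c₀ := NV * NV + 1 with hc₀
    clear_value NV
    clear_value c₀
    -- U = gA^[s₀] preserves V, T := gB kills U-image of V
    have hUV : ∀ x : AlgebraicClosure F, x ^ q ^ M = x →
        (gA^[s₀] x) ^ q ^ M = gA^[s₀] x := by
      intro x hx
      rw [← hgAiter_frob s₀ M x, hx]
    have hUkV : ∀ (k : ℕ) (x : AlgebraicClosure F), x ^ q ^ M = x →
        ((gA^[s₀])^[k] x) ^ q ^ M = (gA^[s₀])^[k] x := by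
      intro k
      induction k with
      | zero => intro x hx; simpa using hx
      | succ k ih =>
        intro x hx
        rw [Function.iterate_succ_apply]
        exact ih _ (hUV x hx)
    have ht0 : t 0 = 0 := by
      rw [htdef]
      simp only
      exact zero_pow (pow_pos (by omega : 0 < q) r).ne'
    have hTU : ∀ x : AlgebraicClosure F, x ^ q ^ M = x → gB (gA^[s₀] x) = 0 := by
      intro x hx
      rw [hheq x]
      have hfx : f x = 0 := by
        rw [hfdef]
        simp only
        rw [sub_eq_zero]
        exact hx
      rw [hfx, ht0]
    -- witness lemma
    have hwitness : ∀ j : ℕ, 0 < j →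
        ∃ w : AlgebraicClosure F, gA^[c₀ * s₀] w = 0 ∧ gB^[j] w ≠ 0 := by
      intro j hj
      obtain ⟨vx, hvV, hvord⟩ := hwit0 j hj
      have hcore : ∀ k l : ℕ, k < l → l ≤ NV → (gA^[s₀])^[k] vx = (gA^[s₀])^[l] vx →
          ∃ w : AlgebraicClosure F, gA^[c₀ * s₀] w = 0 ∧ gB^[j] w ≠ 0 := by
        intro k l hkl hlNV heqv
        set U : AlgebraicClosure F → AlgebraicClosure F := gA^[s₀] with hU
        set d := l - k with hd
        have hd0 : 0 < d := by omega
        have hshift : ∀ s : ℕ, U^[s + k] vx = U^[s + l] vx := by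
          intro s
          rw [Function.iterate_add_apply U s k, Function.iterate_add_apply U s l, heqv]
        set tt := d * (k + 1) with htt
        have httk : k < tt := by
          calc k < k + 1 := Nat.lt_succ_self k
            _ ≤ d * (k + 1) := Nat.le_mul_of_pos_left _ hd0
        have httc₀ : tt ≤ NV * NV := by
          have h1 : d ≤ NV := by omega
          have h2 : k + 1 ≤ NV := by omega
          calc tt = d * (k + 1) := htt
            _ ≤ NV * NV := Nat.mul_le_mul h1 h2
        have hper : ∀ i : ℕ, U^[tt + i * d] vx = U^[tt] vx := by
          intro i
          induction i with
          | zero => simp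
          | succ i ih =>
            have e0 : (i + 1) * d = i * d + d := by ring
            have e1 : tt + (i + 1) * d = (tt + i * d - k) + l := by omega
            have e2 : tt + i * d = (tt + i * d - k) + k := by omega
            rw [e1, ← hshift (tt + i * d - k), ← e2, ih]
        have hix : U^[tt] (U^[tt] vx) = U^[tt] vx := by
          rw [← Function.iterate_add_apply]
          rw [show tt + tt = tt + (k + 1) * d by rw [htt]; ring]
          exact hper (k + 1)
        refine ⟨vx - U^[tt] vx, ?_, ?_⟩
        · have hUm : ∀ mm : ℕ, U^[mm] = gA^[s₀ * mm] := by
            intro mm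
            rw [hU]
            exact (Function.iterate_mul gA s₀ mm).symm
          have hsub : ∀ (mm : ℕ) (a b : AlgebraicClosure F),
              U^[mm] (a - b) = U^[mm] a - U^[mm] b := by
            intro mm a b
            rw [hUm]
            exact hgAiter_sub (s₀ * mm) a b
          have hUtt : U^[tt] (vx - U^[tt] vx) = 0 := by
            rw [hsub, hix, sub_self]
          have htc : tt ≤ c₀ := by omega
          have e3 : c₀ * s₀ = (c₀ - tt) * s₀ + s₀ * tt := by
            obtain ⟨w, hw⟩ := Nat.exists_eq_add_of_le htc
            rw [hw]
            simp only [Nat.add_sub_cancel_left]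
            ring
          rw [e3, Function.iterate_add_apply, ← hUm tt, hUtt, hgAiter0]
        · have hginx : gB (U^[tt] vx) = 0 := by
            rw [show tt = (tt - 1) + 1 by omega, Function.iterate_succ_apply' U, hU]
            exact hTU _ (hUkV (tt - 1) vx hvV)
          have hgw : gB (vx - U^[tt] vx) = gB vx := by
            rw [hgBsub, hginx, sub_zero]
          intro hcontra
          apply hvord
          obtain ⟨j', rfl⟩ : ∃ j', j = j' + 1 := ⟨j - 1, by omega⟩
          rw [Function.iterate_succ_apply, ← hgw, ← Function.iterate_succ_apply gB]
          exact hcontra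
      -- pigeonhole
      have hmaps : ∀ k ∈ Finset.range (NV + 1), (gA^[s₀])^[k] vx ∈ hVfin.toFinset := by
        intro k _
        rw [Set.Finite.mem_toFinset]
        exact hUkV k vx hvV
      obtain ⟨k, hk, l, hl, hkl, hkleq⟩ := Finset.exists_ne_map_eq_of_card_lt_of_maps_to
        (by rw [Finset.card_range, hNV]; omega) hmaps
      rw [Finset.mem_range] at hk hl
      rcases Nat.lt_or_ge k l with h | h
      · exact hcore k l h (by omega) hkleq
      · have h' : l < k := by omega
        exact hcore l k h' (by omega) hkleq.symm
    -- surjectivity of gA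
    have hsurj1 : ∀ z : AlgebraicClosure F, ∃ y, gA y = z := by
      intro z
      set Am := A.map (algebraMap F (AlgebraicClosure F)) with hAm
      have hdegAm : Am.natDegree = A.natDegree := Polynomial.natDegree_map _
      have hdeg1 : (Am - Polynomial.C z).natDegree = A.natDegree := by
        rw [Polynomial.natDegree_sub_C, hdegAm]
      have hdeg0 : (Am - Polynomial.C z).degree ≠ 0 := by
        intro h
        have h2 : (Am - Polynomial.C z).natDegree = 0 :=
          Polynomial.natDegree_eq_zero_iff_degree_le_zero.mpr (le_of_eq h)
        omega
      obtain ⟨y, hy⟩ := IsAlgClosed.exists_root _ hdeg0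
      refine ⟨y, ?_⟩
      rw [Polynomial.IsRoot, Polynomial.eval_sub, Polynomial.eval_C, hAm,
        Polynomial.eval_map, ← Polynomial.aeval_def, sub_eq_zero] at hy
      exact hy
    have hsurj : ∀ (mm : ℕ) (z : AlgebraicClosure F), ∃ y, gA^[mm] y = z := by
      intro mm
      induction mm with
      | zero => intro z; exact ⟨z, rfl⟩
      | succ mm ih =>
        intro z
        obtain ⟨y1, hy1⟩ := hsurj1 z
        obtain ⟨y2, hy2⟩ := ih y1
        exact ⟨y2, by rw [Function.iterate_succ_apply', hy2, hy1]⟩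
    -- lower bound on sDeg along multiples of s₀
    have hlow : ∀ n : ℕ, c₀ < n → M * (n - c₀) ≤ sDeg A (n * s₀) := by
      intro n hn
      obtain ⟨w, hw0, hwne⟩ := hwitness (n - c₀) (by omega)
      obtain ⟨y, hy⟩ := hsurj ((n - c₀) * s₀) w
      have hyroot : gA^[n * s₀] y = 0 := by
        have e : n * s₀ = c₀ * s₀ + (n - c₀) * s₀ := by
          rw [← Nat.add_mul]
          congr 1
          omega
        rw [e, Function.iterate_add_apply, hy, hw0]
      have hall : ∀ ℓ : ℕ, 0 < ℓ → SplitsIn (polyIter A (n * s₀)) ℓ → M * (n - c₀) ≤ ℓ := by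
        intro ℓ hl0 hlsp
        have hyfix : y ^ q ^ ℓ = y := hlsp y (by rw [hgAiter]; exact hyroot)
        have hsp1 : SplitsIn (polyIter A s₀) ℓ :=
          splitsIn_mono hA (Nat.le_mul_of_pos_left s₀ (by omega)) hlsp
        have hspM : SplitsIn (polyIter A s₀) M := by
          have h7 := (hsDeg_mem s₀).2
          rwa [hs₀] at h7
        have hg : SplitsIn (polyIter A s₀) (Nat.gcd M ℓ) := by
          intro z hz
          exact pow_fix_gcd hM0 hl0 (hspM z hz) (hsp1 z hz)
        have hgM : Nat.gcd M ℓ = M := by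
          have h8 : sDeg A s₀ ≤ Nat.gcd M ℓ :=
            hsDeg_le s₀ _ (Nat.gcd_pos_of_pos_left _ hM0) hg
          rw [hs₀] at h8
          have h9 : Nat.gcd M ℓ ≤ M := Nat.le_of_dvd hM0 (Nat.gcd_dvd_left M ℓ)
          omega
        have hMdvd : M ∣ ℓ := by
          rw [← hgM]
          exact Nat.gcd_dvd_right M ℓ
        have hfN : f^[n] y = 0 := hfin_of_root n y hyroot
        have hfJ : f^[n - c₀] y ≠ 0 := by
          intro h0
          apply hwne
          have h10 := lemI (n - c₀) y
          rw [h0, hy] at h10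
          have ht00 : t^[n - c₀] (0 : AlgebraicClosure F) = 0 :=
            Function.iterate_fixed ht0 _
          rw [ht00] at h10
          exact h10.symm
        have hfN' : (fun x : AlgebraicClosure F => x ^ Fintype.card F ^ M - x)^[n] y = 0 := by
          rw [← hqdef, ← hfdef]
          exact hfN
        have hfJ' : (fun x : AlgebraicClosure F =>
            x ^ Fintype.card F ^ M - x)^[n - c₀] y ≠ 0 := by
          rw [← hqdef, ← hfdef]
          exact hfJ
        have hyfix' : y ^ Fintype.card F ^ ℓ = y := by
          rw [← hqdef]
          exact hyfix
        have hmod := module_lower_bound (p := p) (F := F) hM0 hl0 hMdvd hyfix'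
          (show n - c₀ ≤ n by omega) hfN' hfJ'
        calc M * (n - c₀) ≤ M * ((n - c₀) + 1) := Nat.mul_le_mul_left M (by omega)
          _ ≤ ℓ := hmod
      have hmem := Nat.sInf_mem (hScl (n * s₀))
      exact hall _ hmem.1 hmem.2
    -- real analysis: conclude liminf lower bound
    by_contra hcon
    push_neg at hcon
    have hcob : Filter.IsCoboundedUnder (· ≥ ·) Filter.atTop u := by
      refine ⟨(M : ℝ) / s₀, fun a ha => ?_⟩
      rw [Filter.eventually_map] at ha
      obtain ⟨k, hk1, hk2⟩ := (ha.and_frequently hfreq1).exists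
      exact le_trans hk1 hk2
    set b : ℝ := (Filter.liminf u Filter.atTop + (M : ℝ) / s₀) / 2 with hb
    clear_value b
    have hb1 : Filter.liminf u Filter.atTop < b := by
      rw [hb]; linarith
    have hb2 : b < (M : ℝ) / s₀ := by
      rw [hb]; linarith
    have hfreqlt := Filter.frequently_lt_of_liminf_lt hcob hb1
    have hs₀R : (0:ℝ) < (s₀ : ℝ) := by exact_mod_cast hs₀pos
    have hMR : (0:ℝ) < (M : ℝ) := by exact_mod_cast hM0
    have hδ : (0:ℝ) < (M : ℝ) - b * s₀ := by
      have h := (lt_div_iff₀ hs₀R).mp hb2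
      linarith
    obtain ⟨n₁, hn₁⟩ := exists_nat_ge (((M : ℝ) * c₀ + b * s₀) / ((M : ℝ) - b * s₀))
    have hev : ∀ᶠ k in Filter.atTop, b ≤ u k := by
      rw [Filter.eventually_atTop]
      refine ⟨s₀ * (n₁ + c₀ + 1), fun k hk => ?_⟩
      set n := k / s₀ with hn
      clear_value n
      have hk0 : 0 < k := by
        have : 0 < s₀ * (n₁ + c₀ + 1) := by positivity
        omega
      have hn_ge : n₁ + c₀ + 1 ≤ n := by
        rw [hn]
        rw [Nat.le_div_iff_mul_le hs₀pos]
        calc (n₁ + c₀ + 1) * s₀ = s₀ * (n₁ + c₀ + 1) := by ring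
          _ ≤ k := hk
      have hnc₀ : c₀ < n := by omega
      have hkn1 : n * s₀ ≤ k := by
        rw [hn, Nat.mul_comm]
        exact Nat.mul_div_le k s₀
      have hkn2 : k < (n + 1) * s₀ := by
        rw [← Nat.div_lt_iff_lt_mul hs₀pos]
        omega
      have hlow2 : M * (n - c₀) ≤ sDeg A k :=
        le_trans (hlow n hnc₀) (hmono _ _ hkn1)
      -- go to reals
      have hkR : (0:ℝ) < (k : ℝ) := by exact_mod_cast hk0
      have hnR : (n₁ : ℝ) ≤ (n : ℝ) := by exact_mod_cast (by omega : n₁ ≤ n)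
      have hnc₀R : (c₀ : ℝ) ≤ (n : ℝ) := by exact_mod_cast (by omega : c₀ ≤ n)
      have hstep1 : b * ((n : ℝ) + 1) * s₀ ≤ (M : ℝ) * ((n : ℝ) - c₀) := by
        have h11 : ((M : ℝ) * c₀ + b * s₀) / ((M : ℝ) - b * s₀) ≤ (n : ℝ) := by
          linarith
        rw [div_le_iff₀ hδ] at h11
        nlinarith
      have hstep2 : (M : ℝ) * ((n : ℝ) - c₀) ≤ (sDeg A k : ℝ) := by
        have : ((M * (n - c₀) : ℕ) : ℝ) ≤ ((sDeg A k : ℕ) : ℝ) := by exact_mod_cast hlow2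
        rw [Nat.cast_mul, Nat.cast_sub (by omega : c₀ ≤ n)] at this
        exact this
      have hstep3 : (k : ℝ) ≤ ((n : ℝ) + 1) * s₀ := by
        have : ((k : ℕ) : ℝ) ≤ (((n + 1) * s₀ : ℕ) : ℝ) := by exact_mod_cast hkn2.le
        push_cast at this
        linarith
      rw [hu]
      simp only
      rw [le_div_iff₀ hkR]
      rcases le_or_gt 0 b with hb0 | hb0
      · calc b * k ≤ b * (((n : ℝ) + 1) * s₀) := by nlinarith
          _ = b * ((n : ℝ) + 1) * s₀ := by ring
          _ ≤ (M : ℝ) * ((n : ℝ) - c₀) := hstep1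
          _ ≤ (sDeg A k : ℝ) := hstep2
      · have hbk : b * k ≤ 0 := by nlinarith
        have hsd : (0:ℝ) ≤ (sDeg A k : ℝ) := Nat.cast_nonneg _
        linarith
    obtain ⟨k, hk1, hk2⟩ := (hev.and_frequently hfreqlt).exists
    linarith
  -- ===== assembly =====
  refine ⟨part1, ?_, ?_⟩
  · intro heqlim hnil
    have hlt := hnil_case hnil
    rw [heqlim] at hlt
    exact lt_irrefl _ hlt
  · intro hnn
    exact le_antisymm part1 (hnn_case hnn)
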